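/- Let C ⊆ ℝ^p be a nonempty closed convex set with C ≠ ℝ^p. Then the function φ : ℝ^p → ℝ defined by φ(y) := dist(y, ℝ^p ∖ C) − dist(y, C) is concave. -/

import Mathlib

/-!
The signed distance `φ y = infDist y Cᶜ - infDist y C` is the pointwise infimum of the affine
functions `y ↦ c - ⟪y, u⟫` over unit vectors `u` with `C ⊆ {x | ⟪x, u⟫ ≤ c}`: each of them
bounds `φ` from above, and at every point some of them come arbitrarily close to `φ`. Outside `C`
the metric projection onto `C` supplies one; inside `C` a hyperplane separating the interior of
`C` from a nearly closest point of `Cᶜ` does. If `C` has empty interior, `Cᶜ` is dense and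
`φ = -infDist · C`, which is concave since the distance to a convex set is convex.
-/

open Metric Set RealInnerProductSpace

noncomputable def signedInfDist {α : Type*} [PseudoMetricSpace α] (s : Set α) (y : α) : ℝ :=
  infDist y sᶜ - infDist y s

theorem Convex.convexOn_infDist {E : Type*} [SeminormedAddCommGroup E] [NormedSpace ℝ E]
    {s : Set E} (hne : s.Nonempty) (hconv : Convex ℝ s) :
    ConvexOn ℝ univ (infDist · s) := by
  refine ⟨convex_univ, fun x _ y _ a b ha hb hab => ?_⟩
  refine le_of_forall_pos_le_add fun ε hε => ?_
  obtain ⟨x', hx', hxx'⟩ := (infDist_lt_iff hne).1 (lt_add_of_pos_right (infDist x s) hε)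
  obtain ⟨y', hy', hyy'⟩ := (infDist_lt_iff hne).1 (lt_add_of_pos_right (infDist y s) hε)
  calc infDist (a • x + b • y) s
      ≤ ‖a • (x - x') + b • (y - y')‖ := by
        rw [show a • (x - x') + b • (y - y') = a • x + b • y - (a • x' + b • y') by module,
          ← dist_eq_norm]
        exact infDist_le_dist_of_mem (hconv hx' hy' ha hb hab)
    _ ≤ a * dist x x' + b * dist y y' := by
        simpa only [dist_eq_norm, smul_eq_mul] using
          convexOn_univ_norm.2 (mem_univ (x - x')) (mem_univ (y - y')) ha hb hab
    _ ≤ a * (infDist x s + ε) + b * (infDist y s + ε) := by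
        gcongr
    _ = a • infDist x s + b • infDist y s + ε := by
        simp only [smul_eq_mul]; linear_combination ε * hab

theorem signedInfDist_eq_neg_infDist_of_interior_eq_empty {α : Type*} [PseudoMetricSpace α]
    {s : Set α} (hs : interior s = ∅) (y : α) : signedInfDist s y = -infDist y s := by
  rw [signedInfDist, ← infDist_closure (s := sᶜ),
    (interior_eq_empty_iff_dense_compl.1 hs).closure_eq, infDist_zero_of_mem (mem_univ y), zero_sub]

section InnerProductSpace

variable {E : Type*} [NormedAddCommGroup E] [InnerProductSpace ℝ E] {s : Set E} {u : E} {c : ℝ}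

theorem infDist_compl_le_of_forall_inner_le (hu : ‖u‖ = 1) (hs : ∀ x ∈ s, ⟪x, u⟫ ≤ c) {y : E}
    (hy : ⟪y, u⟫ ≤ c) : infDist y sᶜ ≤ c - ⟪y, u⟫ := by
  refine le_of_forall_pos_le_add fun ε hε => ?_
  have hz : y + (c - ⟪y, u⟫ + ε) • u ∈ sᶜ := fun hz => by
    have := hs _ hz
    rw [inner_add_left, real_inner_smul_left, real_inner_self_eq_norm_sq, hu] at this
    linarith
  calc infDist y sᶜ ≤ dist y (y + (c - ⟪y, u⟫ + ε) • u) := infDist_le_dist_of_mem hz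
    _ = c - ⟪y, u⟫ + ε := by
        rw [dist_self_add_right, norm_smul, hu, mul_one, Real.norm_of_nonneg (by linarith)]

theorem inner_sub_le_infDist (hne : s.Nonempty) (hu : ‖u‖ ≤ 1) (hs : ∀ x ∈ s, ⟪x, u⟫ ≤ c)
    (y : E) : ⟪y, u⟫ - c ≤ infDist y s :=
  (le_infDist hne).2 fun x hx =>
    calc ⟪y, u⟫ - c ≤ ⟪y - x, u⟫ := by rw [inner_sub_left]; linarith [hs x hx]
      _ ≤ ‖y - x‖ * ‖u‖ := real_inner_le_norm _ _
      _ ≤ dist y x := by rw [dist_eq_norm]; exact mul_le_of_le_one_right (norm_nonneg _) hu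

theorem signedInfDist_le_of_forall_inner_le (hne : s.Nonempty) (hu : ‖u‖ = 1)
    (hs : ∀ x ∈ s, ⟪x, u⟫ ≤ c) (y : E) : signedInfDist s y ≤ c - ⟪y, u⟫ := by
  rw [signedInfDist]
  by_cases hy : ⟪y, u⟫ ≤ c
  · linarith [infDist_compl_le_of_forall_inner_le hu hs hy, infDist_nonneg (x := y) (s := s)]
  · have hys : y ∈ sᶜ := fun h => hy (hs y h)
    linarith [infDist_zero_of_mem hys, inner_sub_le_infDist hne hu.le hs y]

theorem exists_norm_eq_one_forall_inner_lt [CompleteSpace E] (hconv : Convex ℝ s)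
    (hopen : IsOpen s) (hne : s.Nonempty) {w : E} (hw : w ∉ s) :
    ∃ u : E, ‖u‖ = 1 ∧ ∀ x ∈ s, ⟪x, u⟫ < ⟪w, u⟫ := by
  obtain ⟨f, hf⟩ := geometric_hahn_banach_open_point hconv hopen hw
  set v := (InnerProductSpace.toDual ℝ E).symm f
  have hv : ∀ x, ⟪x, v⟫ = f x := fun x => by
    rw [real_inner_comm]; exact InnerProductSpace.toDual_symm_apply
  have hv0 : v ≠ 0 := by
    obtain ⟨x, hx⟩ := hne
    intro h
    simpa [← hv, h] using hf x hx
  refine ⟨‖v‖⁻¹ • v, norm_smul_inv_norm hv0, fun x hx => ?_⟩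
  simp only [real_inner_smul_right, hv]
  exact mul_lt_mul_of_pos_left (hf x hx) (by positivity)

theorem exists_halfspace_sub_inner_lt_infDist_compl_add [CompleteSpace E] (hconv : Convex ℝ s)
    (hint : (interior s).Nonempty) (hcompl : sᶜ.Nonempty) (m : E) {ε : ℝ} (hε : 0 < ε) :
    ∃ u : E, ∃ c : ℝ, ‖u‖ = 1 ∧ (∀ x ∈ s, ⟪x, u⟫ ≤ c) ∧ c - ⟪m, u⟫ < infDist m sᶜ + ε := by
  obtain ⟨w, hw, hmw⟩ := (infDist_lt_iff hcompl).1 (lt_add_of_pos_right (infDist m sᶜ) hε)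
  obtain ⟨u, hu, hlt⟩ := exists_norm_eq_one_forall_inner_lt hconv.interior isOpen_interior hint
    (fun h => hw (interior_subset h))
  refine ⟨u, ⟪w, u⟫, hu, fun x hx => ?_, ?_⟩
  · have hcl : closure (interior s) ⊆ {x | ⟪x, u⟫ ≤ ⟪w, u⟫} :=
      closure_minimal (fun x hx => (hlt x hx).le)
        (isClosed_le (continuous_id.inner continuous_const) continuous_const)
    rw [hconv.closure_interior_eq_closure_of_nonempty_interior hint] at hcl
    exact hcl (subset_closure hx)
  · calc ⟪w, u⟫ - ⟪m, u⟫ = ⟪w - m, u⟫ := (inner_sub_left _ _ _).symm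
      _ ≤ ‖w - m‖ * ‖u‖ := real_inner_le_norm _ _
      _ = dist m w := by rw [hu, mul_one, dist_comm, dist_eq_norm]
      _ < infDist m sᶜ + ε := hmw

theorem exists_halfspace_sub_inner_eq_neg_infDist [CompleteSpace E] (hne : s.Nonempty)
    (hcl : IsClosed s) (hconv : Convex ℝ s) {m : E} (hm : m ∉ s) :
    ∃ u : E, ∃ c : ℝ, ‖u‖ = 1 ∧ (∀ x ∈ s, ⟪x, u⟫ ≤ c) ∧ c - ⟪m, u⟫ = -infDist m s := by
  obtain ⟨z, hz, hmin⟩ := exists_norm_eq_iInf_of_complete_convex hne hcl.isComplete hconv m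
  have hobtuse := (norm_eq_iInf_iff_real_inner_le_zero hconv hz).1 hmin
  have hdist : infDist m s = ‖m - z‖ := by
    rw [infDist_eq_iInf, hmin]; simp only [dist_eq_norm]
  have hmz : m - z ≠ 0 := sub_ne_zero.2 fun h => hm (h ▸ hz)
  refine ⟨‖m - z‖⁻¹ • (m - z), ⟪z, ‖m - z‖⁻¹ • (m - z)⟫, norm_smul_inv_norm hmz,
    fun x hx => ?_, ?_⟩
  · have h := hobtuse x hx
    rw [real_inner_comm] at h
    have : ⟪x - z, ‖m - z‖⁻¹ • (m - z)⟫ ≤ 0 := by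
      rw [real_inner_smul_right]; exact mul_nonpos_of_nonneg_of_nonpos (by positivity) h
    rwa [inner_sub_left, sub_nonpos] at this
  · rw [← inner_sub_left, real_inner_smul_right, ← neg_sub m z, inner_neg_left,
      real_inner_self_eq_norm_sq, hdist]
    field_simp

theorem exists_halfspace_sub_inner_lt_signedInfDist_add [CompleteSpace E] (hne : s.Nonempty)
    (hcl : IsClosed s) (hconv : Convex ℝ s) (hint : (interior s).Nonempty) (hs : s ≠ univ)
    (m : E) {ε : ℝ} (hε : 0 < ε) :
    ∃ u : E, ∃ c : ℝ, ‖u‖ = 1 ∧ (∀ x ∈ s, ⟪x, u⟫ ≤ c) ∧ c - ⟪m, u⟫ < signedInfDist s m + ε := by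
  by_cases hm : m ∈ s
  · obtain ⟨u, c, hu, hsu, hlt⟩ := exists_halfspace_sub_inner_lt_infDist_compl_add hconv hint
      (nonempty_compl.2 hs) m hε
    refine ⟨u, c, hu, hsu, ?_⟩
    rwa [signedInfDist, infDist_zero_of_mem hm, sub_zero]
  · obtain ⟨u, c, hu, hsu, heq⟩ := exists_halfspace_sub_inner_eq_neg_infDist hne hcl hconv hm
    refine ⟨u, c, hu, hsu, ?_⟩
    rw [signedInfDist, infDist_zero_of_mem (mem_compl hm), zero_sub, ← heq]
    exact lt_add_of_pos_right _ hε

theorem concaveOn_signedInfDist_of_interior_nonempty [CompleteSpace E] (hne : s.Nonempty)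
    (hcl : IsClosed s) (hconv : Convex ℝ s) (hint : (interior s).Nonempty) (hs : s ≠ univ) :
    ConcaveOn ℝ univ (signedInfDist s) := by
  refine ⟨convex_univ, fun x _ y _ a b ha hb hab => ?_⟩
  refine le_of_forall_pos_le_add fun ε hε => ?_
  obtain ⟨u, c, hu, hsu, hlt⟩ :=
    exists_halfspace_sub_inner_lt_signedInfDist_add hne hcl hconv hint hs (a • x + b • y) hε
  have hx := signedInfDist_le_of_forall_inner_le hne hu hsu x
  have hy := signedInfDist_le_of_forall_inner_le hne hu hsu y
  rw [inner_add_left, real_inner_smul_left, real_inner_smul_left] at hlt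
  calc a • signedInfDist s x + b • signedInfDist s y
      ≤ a * (c - ⟪x, u⟫) + b * (c - ⟪y, u⟫) := by simp only [smul_eq_mul]; gcongr
    _ = c - (a * ⟪x, u⟫ + b * ⟪y, u⟫) := by linear_combination c * hab
    _ ≤ signedInfDist s (a • x + b • y) + ε := hlt.le

theorem concaveOn_signedInfDist [CompleteSpace E] (hne : s.Nonempty) (hcl : IsClosed s)
    (hconv : Convex ℝ s) (hs : s ≠ univ) : ConcaveOn ℝ univ (signedInfDist s) := by
  rcases (interior s).eq_empty_or_nonempty with hint | hint
  · rw [funext (signedInfDist_eq_neg_infDist_of_interior_eq_empty hint)]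
    exact (hconv.convexOn_infDist hne).neg
  · exact concaveOn_signedInfDist_of_interior_nonempty hne hcl hconv hint hs

end InnerProductSpace

/-- For a nonempty closed convex set C ⊊ ℝ^p,
φ(y) := dist(y, ℝ^p ∖ C) − dist(y, C) is concave. -/
theorem stmt_6 (p : ℕ) (C : Set (EuclideanSpace ℝ (Fin p)))
    (hne : C.Nonempty) (hcl : IsClosed C) (hconv : Convex ℝ C)
    (hCne : C ≠ Set.univ)
    (φ : EuclideanSpace ℝ (Fin p) → ℝ)
    (hφ : ∀ y, φ y = Metric.infDist y Cᶜ - Metric.infDist y C) :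
    ∀ (a b : EuclideanSpace ℝ (Fin p)) (lam : ℝ), 0 ≤ lam → lam ≤ 1 →
      lam * φ a + (1 - lam) * φ b ≤ φ (lam • a + (1 - lam) • b) := by
  intro a b lam h0 h1
  obtain rfl : φ = signedInfDist C := funext hφ
  exact (concaveOn_signedInfDist hne hcl hconv hCne).2 (mem_univ a) (mem_univ b) h0
    (sub_nonneg.2 h1) (add_sub_cancel lam 1)
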